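/- For the Lie algebra aff(ℂ) = g₄₂₄ ([T,Y]=Y, [T,Z]=Z, [X,Y]=−Z, [X,Z]=Y), the operators Ĥ_A = α∂_u + ᾱ∂_{ū} + (i/2)(βe^u + β̄e^{ū}), where A corresponds to the pair (α,β) ∈ ℂ² via A = Re(α)T + Im(α)X + Re(β)Y' + Im(β)Z' in suitable complex coordinates, satisfy [Ĥ_A, Ĥ_B] = Ĥ_{[A,B]} where aff(ℂ) is identified with ℂ² with bracket [(α,β),(α',β')] = (0, αβ' − α'β). -/

import Mathlib

/-- Wirtinger derivative `∂_u f = (1/2)(∂_x − i∂_y)f` of a real-smooth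
function `f : ℂ → ℂ`. -/
noncomputable def wirtD (f : ℂ → ℂ) (u : ℂ) : ℂ :=
  (1 / 2 : ℂ) * (fderiv ℝ f u 1 - Complex.I * fderiv ℝ f u Complex.I)

/-- Conjugate Wirtinger derivative `∂_{ū} f = (1/2)(∂_x + i∂_y)f`. -/
noncomputable def wirtDbar (f : ℂ → ℂ) (u : ℂ) : ℂ :=
  (1 / 2 : ℂ) * (fderiv ℝ f u 1 + Complex.I * fderiv ℝ f u Complex.I)

/-- The operator `Ĥ_{(α,β)} f = α∂_u f + ᾱ∂_{ū} f + (i/2)(βe^u + β̄e^{ū})f`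
associated to `(α,β) ∈ aff(ℂ) ≅ ℂ²`. -/
noncomputable def HopAffC (α β : ℂ) (f : ℂ → ℂ) : ℂ → ℂ := fun u =>
  α * wirtD f u + (starRingEnd ℂ) α * wirtDbar f u
    + Complex.I / 2 * (β * Complex.exp u
        + (starRingEnd ℂ) β * Complex.exp ((starRingEnd ℂ) u)) * f u

section Helpers

open Complex

/-- auxiliary: linearity of wirtD -/
lemma wirtD_add {p q : ℂ → ℂ} {u : ℂ} (hp : DifferentiableAt ℝ p u)
    (hq : DifferentiableAt ℝ q u) :
    wirtD (fun x => p x + q x) u = wirtD p u + wirtD q u := by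
  simp only [wirtD, fderiv_fun_add hp hq, ContinuousLinearMap.add_apply]; ring

lemma wirtDbar_add {p q : ℂ → ℂ} {u : ℂ} (hp : DifferentiableAt ℝ p u)
    (hq : DifferentiableAt ℝ q u) :
    wirtDbar (fun x => p x + q x) u = wirtDbar p u + wirtDbar q u := by
  simp only [wirtDbar, fderiv_fun_add hp hq, ContinuousLinearMap.add_apply]; ring

lemma wirtD_const_mul {p : ℂ → ℂ} {u : ℂ} (c : ℂ) (hp : DifferentiableAt ℝ p u) :
    wirtD (fun x => c * p x) u = c * wirtD p u := by
  simp only [wirtD, fderiv_const_mul hp c, ContinuousLinearMap.smul_apply, smul_eq_mul]; ring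

lemma wirtDbar_const_mul {p : ℂ → ℂ} {u : ℂ} (c : ℂ) (hp : DifferentiableAt ℝ p u) :
    wirtDbar (fun x => c * p x) u = c * wirtDbar p u := by
  simp only [wirtDbar, fderiv_const_mul hp c, ContinuousLinearMap.smul_apply, smul_eq_mul]; ring

lemma wirtD_mul {p q : ℂ → ℂ} {u : ℂ} (hp : DifferentiableAt ℝ p u)
    (hq : DifferentiableAt ℝ q u) :
    wirtD (fun x => p x * q x) u = wirtD p u * q u + p u * wirtD q u := by
  simp only [wirtD, fderiv_fun_mul hp hq, ContinuousLinearMap.add_apply,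
    ContinuousLinearMap.smul_apply, smul_eq_mul]; ring

lemma wirtDbar_mul {p q : ℂ → ℂ} {u : ℂ} (hp : DifferentiableAt ℝ p u)
    (hq : DifferentiableAt ℝ q u) :
    wirtDbar (fun x => p x * q x) u = wirtDbar p u * q u + p u * wirtDbar q u := by
  simp only [wirtDbar, fderiv_fun_mul hp hq, ContinuousLinearMap.add_apply,
    ContinuousLinearMap.smul_apply, smul_eq_mul]; ring

lemma fderiv_cexp_real (u v : ℂ) : fderiv ℝ Complex.exp u v = Complex.exp u * v := by
  have h := ((Complex.hasDerivAt_exp u).hasFDerivAt.restrictScalars ℝ).fderiv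
  rw [h]; simp [mul_comm]

lemma diff_cexp : Differentiable ℝ Complex.exp := fun u =>
  ((Complex.hasDerivAt_exp u).hasFDerivAt.restrictScalars ℝ).differentiableAt

lemma hasFDerivAt_conj (u : ℂ) :
    HasFDerivAt (starRingEnd ℂ) (Complex.conjCLE.toContinuousLinearMap) u :=
  Complex.conjCLE.toContinuousLinearMap.hasFDerivAt

lemma fderiv_cexpbar (u v : ℂ) :
    fderiv ℝ (fun x => Complex.exp ((starRingEnd ℂ) x)) u v
      = Complex.exp ((starRingEnd ℂ) u) * (starRingEnd ℂ) v := by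
  have h2 := (Complex.hasDerivAt_exp ((starRingEnd ℂ) u)).hasFDerivAt.restrictScalars ℝ
  have h : HasFDerivAt (fun x : ℂ => Complex.exp ((starRingEnd ℂ) x))
      ((ContinuousLinearMap.restrictScalars ℝ (ContinuousLinearMap.smulRight 1
        (Complex.exp ((starRingEnd ℂ) u)))).comp
        (Complex.conjCLE.toContinuousLinearMap)) u := h2.comp u (hasFDerivAt_conj u)
  rw [h.fderiv]
  simp [ContinuousLinearMap.comp_apply, mul_comm]

lemma diff_cexpbar : Differentiable ℝ (fun x : ℂ => Complex.exp ((starRingEnd ℂ) x)) := by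
  intro u
  exact (diff_cexp _).comp u (hasFDerivAt_conj u).differentiableAt

lemma wirtD_exp (u : ℂ) : wirtD Complex.exp u = Complex.exp u := by
  simp only [wirtD, fderiv_cexp_real]
  have : Complex.I * (Complex.exp u * Complex.I) = -Complex.exp u := by
    rw [mul_comm (Complex.exp u), ← mul_assoc, Complex.I_mul_I]; ring
  rw [this]; ring

lemma wirtDbar_exp (u : ℂ) : wirtDbar Complex.exp u = 0 := by
  simp only [wirtDbar, fderiv_cexp_real]
  have : Complex.I * (Complex.exp u * Complex.I) = -Complex.exp u := by
    rw [mul_comm (Complex.exp u), ← mul_assoc, Complex.I_mul_I]; ring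
  rw [this]; ring

lemma wirtD_expbar (u : ℂ) : wirtD (fun x => Complex.exp ((starRingEnd ℂ) x)) u = 0 := by
  simp only [wirtD, fderiv_cexpbar, map_one, Complex.conj_I]
  ring_nf
  rw [Complex.I_sq]; ring

lemma wirtDbar_expbar (u : ℂ) :
    wirtDbar (fun x => Complex.exp ((starRingEnd ℂ) x)) u
      = Complex.exp ((starRingEnd ℂ) u) := by
  simp only [wirtDbar, fderiv_cexpbar, map_one, Complex.conj_I]
  ring_nf
  rw [Complex.I_sq]; ring

lemma wirtDbar_sub' {p q : ℂ → ℂ} {u : ℂ} (hp : DifferentiableAt ℝ p u)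
    (hq : DifferentiableAt ℝ q u) :
    wirtDbar (fun x => p x - q x) u = wirtDbar p u - wirtDbar q u := by
  simp only [wirtDbar, fderiv_fun_sub hp hq, ContinuousLinearMap.sub_apply]; ring

end Helpers

/-- For `aff(ℂ)` identified with ℂ² with bracket `[(α,β),(α',β')] = (0, αβ'−α'β)`,
the operators `Ĥ_{(α,β)}` satisfy `[Ĥ_A, Ĥ_B] = Ĥ_{[A,B]}`. -/
theorem stmt_14 (α β α' β' : ℂ) (f : ℂ → ℂ) (hf : ContDiff ℝ (⊤ : ℕ∞) f) :
    HopAffC α β (HopAffC α' β' f) - HopAffC α' β' (HopAffC α β f)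
      = HopAffC 0 (α * β' - α' * β) f := by
  have hle1 : (1 : WithTop ℕ∞) ≤ ((⊤ : ℕ∞) : WithTop ℕ∞) := by
    exact_mod_cast le_top
  have hfi : ContDiff ℝ ((⊤ : ℕ∞) : WithTop ℕ∞) f := hf.of_le (by simp)
  have hdf : Differentiable ℝ f := (contDiff_infty_iff_fderiv.mp hfi).1
  have hdf2 : ContDiff ℝ ((⊤ : ℕ∞) : WithTop ℕ∞) (fderiv ℝ f) :=
    (contDiff_infty_iff_fderiv.mp hfi).2
  have hDv : ∀ v : ℂ, Differentiable ℝ (fun x => fderiv ℝ f x v) := fun v =>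
    (hdf2.clm_apply contDiff_const).differentiable (by simp)
  have hA : Differentiable ℝ (fun x => fderiv ℝ f x 1) := hDv 1
  have hB : Differentiable ℝ (fun x => fderiv ℝ f x Complex.I) := hDv Complex.I
  have hwD : Differentiable ℝ (wirtD f) := by
    unfold wirtD
    exact ((hA.sub (hB.const_mul Complex.I)).const_mul _)
  have hwDbar : Differentiable ℝ (wirtDbar f) := by
    unfold wirtDbar
    exact ((hA.add (hB.const_mul Complex.I)).const_mul _)
  have hm : ∀ b : ℂ, Differentiable ℝ (fun y : ℂ =>
      Complex.I / 2 * (b * Complex.exp y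
        + (starRingEnd ℂ) b * Complex.exp ((starRingEnd ℂ) y))) := fun b =>
    (((diff_cexp.const_mul b).add (diff_cexpbar.const_mul _)).const_mul _)
  -- Wirtinger derivatives of the multiplier
  have wDm : ∀ b : ℂ, ∀ x : ℂ, wirtD (fun y : ℂ =>
      Complex.I / 2 * (b * Complex.exp y
        + (starRingEnd ℂ) b * Complex.exp ((starRingEnd ℂ) y))) x
      = Complex.I / 2 * (b * Complex.exp x) := by
    intro b x
    rw [wirtD_const_mul _ (((diff_cexp.const_mul b).fun_add (diff_cexpbar.const_mul _)) x),
      wirtD_add ((diff_cexp.const_mul b) x) ((diff_cexpbar.const_mul _) x),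
      wirtD_const_mul _ (diff_cexp x), wirtD_const_mul _ (diff_cexpbar x),
      wirtD_exp, wirtD_expbar]
    ring
  have wDbarm : ∀ b : ℂ, ∀ x : ℂ, wirtDbar (fun y : ℂ =>
      Complex.I / 2 * (b * Complex.exp y
        + (starRingEnd ℂ) b * Complex.exp ((starRingEnd ℂ) y))) x
      = Complex.I / 2 * ((starRingEnd ℂ) b * Complex.exp ((starRingEnd ℂ) x)) := by
    intro b x
    rw [wirtDbar_const_mul _ (((diff_cexp.const_mul b).fun_add (diff_cexpbar.const_mul _)) x),
      wirtDbar_add ((diff_cexp.const_mul b) x) ((diff_cexpbar.const_mul _) x),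
      wirtDbar_const_mul _ (diff_cexp x), wirtDbar_const_mul _ (diff_cexpbar x),
      wirtDbar_exp, wirtDbar_expbar]
    ring
  -- symmetry of second derivatives
  have hsym : ∀ x : ℂ, fderiv ℝ (fun y => fderiv ℝ f y 1) x Complex.I
      = fderiv ℝ (fun y => fderiv ℝ f y Complex.I) x 1 := by
    intro x
    have key : ∀ v w : ℂ, fderiv ℝ (fun y => fderiv ℝ f y v) x w
        = fderiv ℝ (fderiv ℝ f) x w v := by
      intro v w
      rw [fderiv_clm_apply ((hdf2.differentiable (by simp)) x) (differentiableAt_const v)]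
      simp
    rw [key, key]
    exact (hf.contDiffAt.isSymmSndFDerivAt (by rw [minSmoothness_of_isRCLikeNormedField]; exact WithTop.coe_le_coe.mpr (le_top : (2 : ℕ∞) ≤ ⊤))).eq Complex.I 1
  -- commutativity of the Wirtinger derivatives
  have hcomm : ∀ x : ℂ, wirtD (wirtDbar f) x = wirtDbar (wirtD f) x := by
    intro x
    rw [show wirtDbar f = (fun y => (1/2 : ℂ) * (fderiv ℝ f y 1
        + Complex.I * fderiv ℝ f y Complex.I)) from rfl,
      show wirtD f = (fun y => (1/2 : ℂ) * (fderiv ℝ f y 1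
        - Complex.I * fderiv ℝ f y Complex.I)) from rfl,
      wirtD_const_mul _ ((hA x).fun_add ((hB x).const_mul _)),
      wirtD_add (hA x) ((hB x).const_mul _),
      wirtD_const_mul _ (hB x),
      wirtDbar_const_mul _ ((hA x).fun_sub ((hB x).const_mul _)),
      wirtDbar_sub' (hA x) ((hB x).const_mul _),
      wirtDbar_const_mul _ (hB x)]
    simp only [wirtD, wirtDbar]
    rw [hsym x]
    ring
  funext u
  simp only [Pi.sub_apply, HopAffC]
  -- second-level Wirtinger derivatives of the operators
  have key : ∀ a b : ℂ,
      wirtD (fun y => a * wirtD f y + (starRingEnd ℂ) a * wirtDbar f y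
        + Complex.I / 2 * (b * Complex.exp y
          + (starRingEnd ℂ) b * Complex.exp ((starRingEnd ℂ) y)) * f y) u
      = a * wirtD (wirtD f) u + (starRingEnd ℂ) a * wirtD (wirtDbar f) u
        + (Complex.I / 2 * (b * Complex.exp u) * f u
          + Complex.I / 2 * (b * Complex.exp u
            + (starRingEnd ℂ) b * Complex.exp ((starRingEnd ℂ) u)) * wirtD f u) := by
    intro a b
    rw [wirtD_add (((hwD.const_mul a).fun_add (hwDbar.const_mul _)) u)
        (((hm b).fun_mul hdf) u),
      wirtD_add ((hwD.const_mul a) u) ((hwDbar.const_mul _) u),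
      wirtD_const_mul a (hwD u), wirtD_const_mul _ (hwDbar u),
      wirtD_mul ((hm b) u) (hdf u), wDm b u]
  have keybar : ∀ a b : ℂ,
      wirtDbar (fun y => a * wirtD f y + (starRingEnd ℂ) a * wirtDbar f y
        + Complex.I / 2 * (b * Complex.exp y
          + (starRingEnd ℂ) b * Complex.exp ((starRingEnd ℂ) y)) * f y) u
      = a * wirtDbar (wirtD f) u + (starRingEnd ℂ) a * wirtDbar (wirtDbar f) u
        + (Complex.I / 2 * ((starRingEnd ℂ) b * Complex.exp ((starRingEnd ℂ) u)) * f u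
          + Complex.I / 2 * (b * Complex.exp u
            + (starRingEnd ℂ) b * Complex.exp ((starRingEnd ℂ) u)) * wirtDbar f u) := by
    intro a b
    rw [wirtDbar_add (((hwD.const_mul a).fun_add (hwDbar.const_mul _)) u)
        (((hm b).fun_mul hdf) u),
      wirtDbar_add ((hwD.const_mul a) u) ((hwDbar.const_mul _) u),
      wirtDbar_const_mul a (hwD u), wirtDbar_const_mul _ (hwDbar u),
      wirtDbar_mul ((hm b) u) (hdf u), wDbarm b u]
  rw [show HopAffC α' β' f = (fun y => α' * wirtD f y
        + (starRingEnd ℂ) α' * wirtDbar f y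
        + Complex.I / 2 * (β' * Complex.exp y
          + (starRingEnd ℂ) β' * Complex.exp ((starRingEnd ℂ) y)) * f y) from rfl,
    show HopAffC α β f = (fun y => α * wirtD f y
        + (starRingEnd ℂ) α * wirtDbar f y
        + Complex.I / 2 * (β * Complex.exp y
          + (starRingEnd ℂ) β * Complex.exp ((starRingEnd ℂ) y)) * f y) from rfl,
    key α' β', key α β, keybar α' β', keybar α β, hcomm u]
  simp only [map_sub, map_mul, map_zero]
  ring
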